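/- arXiv:2411.15095 — 3 statements merged into one kernel-verified Lean document; each statement's English description precedes it below -/
import Mathlib

section
/- Fix d, b ∈ ℕ and a subset V ⊆ {1, …, d}, and let f : [0,1]^{|V|} → ℝ be an L-Lipschitz function with 0 ≤ f(y) ≤ C for all y, for some constant C ≥ 1. Then there exists a histogram q ∈ 𝒬_{d,b,V,C} such that ‖f ∘ e_V − q‖₁ ≤ √|V| · L / (2b), where ‖·‖₁ is the L¹ norm on [0,1]^d with respect to Lebesgue measure; in particular min_{q ∈ 𝒬_{d,b,V,C}} ‖f ∘ e_V − q‖₁ ≤ √|V| · L / (2b). -/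
/-! Weight each cell by the value of `f` at its centre. A point of a cell is within `√|V| / (2b)`
of the centre, so by the Lipschitz bound `|f ∘ e_V - q| ≤ √|V| · L / (2b)` wherever the point
lies in a single cell, i.e. off the grid hyperplanes, a null set. Integrating this bound over the
unit cube, of volume `1`, gives the claim. -/

open MeasureTheory

/-- The unit cube `[0,1]^d` in `d`-dimensional Euclidean space (with the `L²` norm). -/
def unitCube (d : ℕ) : Set (EuclideanSpace ℝ (Fin d)) :=
  {x | ∀ i, 0 ≤ x i ∧ x i ≤ 1}

/-- The cell `Λ_{d,b,A,V}` of points `x ∈ [0,1]^d` whose coordinates in `V` lie in the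
sub-interval of `[0,1]` of width `1/b` indexed by `A`. -/
def histCell (d b : ℕ) (V : Finset (Fin d)) (A : V → Fin b) :
    Set (EuclideanSpace ℝ (Fin d)) :=
  {x ∈ unitCube d | ∀ i : V, (A i : ℝ) / b ≤ x i ∧ x i ≤ ((A i : ℝ) + 1) / b}

/-- The histogram class `𝒬_{d,b,V,C}`: nonnegative linear combinations (with weights in
`[0, C]`) of indicators of the cells `Λ_{d,b,A,V}`. -/
def histClass (d b : ℕ) (V : Finset (Fin d)) (C : ℝ) :
    Set (EuclideanSpace ℝ (Fin d) → ℝ) :=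
  {q | ∃ w : (V → Fin b) → ℝ, (∀ A, w A ∈ Set.Icc (0 : ℝ) C) ∧
    q = fun x => ∑ A : V → Fin b, w A * (histCell d b V A).indicator (fun _ => (1 : ℝ)) x}

/-- The coordinate projection `e_V : [0,1]^d → [0,1]^{|V|}` selecting the coordinates in
`V` in increasing order. -/
def coordProj (d : ℕ) (V : Finset (Fin d)) (x : EuclideanSpace ℝ (Fin d)) :
    EuclideanSpace ℝ (Fin V.card) :=
  WithLp.toLp 2 (fun i => x (V.orderEmbOfFin rfl i))

lemma measurableSet_unitCube (d : ℕ) : MeasurableSet (unitCube d) := by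
  have hcube : unitCube d = ⋂ i, {x | 0 ≤ x i} ∩ {x | x i ≤ 1} := by
    ext x
    simp [unitCube]
  rw [hcube]
  refine IsClosed.measurableSet (isClosed_iInter fun i => ?_)
  exact (isClosed_le continuous_const (by fun_prop)).inter
    (isClosed_le (by fun_prop) continuous_const)

lemma volume_unitCube (d : ℕ) : volume (unitCube d) = 1 := by
  have hcube : unitCube d =
      (MeasurableEquiv.toLp 2 (Fin d → ℝ)).symm ⁻¹' Set.univ.pi fun _ => Set.Icc 0 1 := by
    ext x
    simp [unitCube, Pi.le_def, forall_and]
  rw [hcube, (EuclideanSpace.volume_preserving_symm_measurableEquiv_toLp (Fin d)).measure_preimage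
    (MeasurableSet.univ_pi fun _ => measurableSet_Icc).nullMeasurableSet, volume_pi,
    Measure.pi_pi]
  simp

lemma volume_setOf_coord_eq (d : ℕ) (v : Fin d) (r : ℝ) :
    volume {x : EuclideanSpace ℝ (Fin d) | x v = r} = 0 := by
  have hplane : {x : EuclideanSpace ℝ (Fin d) | x v = r} =
      (MeasurableEquiv.toLp 2 (Fin d → ℝ)).symm ⁻¹' (Function.eval v ⁻¹' {r}) := by
    ext x
    simp
  rw [hplane, (EuclideanSpace.volume_preserving_symm_measurableEquiv_toLp (Fin d)).measure_preimage
    (measurable_pi_apply v (measurableSet_singleton r)).nullMeasurableSet, volume_pi]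
  exact Measure.pi_eval_preimage_null _ (measure_singleton r)

lemma EuclideanSpace.dist_le_sqrt_card_mul {ι : Type*} [Fintype ι]
    {x y : EuclideanSpace ℝ ι} {r : ℝ} (h : ∀ i, |x i - y i| ≤ r) :
    dist x y ≤ √(Fintype.card ι) * r := by
  cases isEmpty_or_nonempty ι
  · simp [Subsingleton.elim x y]
  have hr : 0 ≤ r := (abs_nonneg _).trans (h (Classical.arbitrary ι))
  calc dist x y = √(∑ i, dist (x i) (y i) ^ 2) := EuclideanSpace.dist_eq x y
    _ ≤ √(∑ _i : ι, r ^ 2) := by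
      gcongr with i
      exact h i
    _ = √(Fintype.card ι) * r := by
      rw [Finset.sum_const, Finset.card_univ, nsmul_eq_mul, Real.sqrt_mul (Nat.cast_nonneg _),
        Real.sqrt_sq hr]

lemma exists_fin_mem_Icc_div {b : ℕ} (hb : 0 < b) {t : ℝ} (ht : t ∈ Set.Icc (0 : ℝ) 1) :
    ∃ a : Fin b, t ∈ Set.Icc ((a : ℝ) / b) ((a + 1) / b) := by
  have hbR : (0 : ℝ) < b := Nat.cast_pos.2 hb
  simp only [Set.mem_Icc, div_le_iff₀ hbR, le_div_iff₀ hbR]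
  rcases ht.2.lt_or_eq with ht1 | rfl
  · have hbt : 0 ≤ t * b := mul_nonneg ht.1 hbR.le
    refine ⟨⟨⌊t * b⌋₊, (Nat.floor_lt hbt).2 (by nlinarith)⟩, Nat.floor_le hbt,
      (Nat.lt_floor_add_one _).le⟩
  · refine ⟨⟨b - 1, Nat.sub_lt hb one_pos⟩, ?_, ?_⟩ <;> simp [Nat.cast_pred hb]

lemma Nat.floor_mul_eq_of_mem_Icc_div {b a : ℕ} {t : ℝ}
    (ht : t ∈ Set.Icc ((a : ℝ) / b) ((a + 1) / b)) (hgrid : t ≠ (a + 1) / b) :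
    ⌊t * b⌋₊ = a := by
  obtain ⟨hl, hu⟩ := ht
  rcases b.eq_zero_or_pos with rfl | hb
  · simp only [Nat.cast_zero, div_zero] at hl hu hgrid
    exact absurd (le_antisymm hu hl) hgrid
  have hbR : (0 : ℝ) < b := Nat.cast_pos.2 hb
  rw [div_le_iff₀ hbR] at hl
  rw [le_div_iff₀ hbR] at hu
  rw [Nat.floor_eq_iff ((Nat.cast_nonneg a).trans hl)]
  exact ⟨hl, hu.lt_of_ne fun h => hgrid (by rw [← h]; field_simp)⟩

lemma abs_sub_div_le_of_mem_Icc_div {b a : ℕ} {t : ℝ}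
    (ht : t ∈ Set.Icc ((a : ℝ) / b) ((a + 1) / b)) :
    |t - (a + 1 / 2) / b| ≤ 1 / (2 * b) := by
  have hupper : (a + 1 / 2 : ℝ) / b + 1 / (2 * b) = (a + 1) / b := by
    rw [← div_div, ← add_div]; ring_nf
  have hlower : (a + 1 / 2 : ℝ) / b - 1 / (2 * b) = a / b := by
    rw [← div_div, ← sub_div]; ring_nf
  rw [abs_le]
  constructor <;> linarith [ht.1, ht.2]

section Cells

variable {d b : ℕ} {V : Finset (Fin d)}

/-- The cells overlap only on this null set. -/
def gridHyperplanes (d b : ℕ) : Set (EuclideanSpace ℝ (Fin d)) :=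
  ⋃ (v : Fin d) (k : ℕ), {x | x v = k / b}

lemma volume_gridHyperplanes : volume (gridHyperplanes d b) = 0 :=
  measure_iUnion_null fun v => measure_iUnion_null fun _ => volume_setOf_coord_eq d v _

noncomputable def cellCenter (b : ℕ) (V : Finset (Fin d)) (A : V → Fin b) :
    EuclideanSpace ℝ (Fin V.card) :=
  WithLp.toLp 2 fun i => ((A (V.orderIsoOfFin rfl i) : ℝ) + 1 / 2) / b

noncomputable def histogram (d b : ℕ) (V : Finset (Fin d)) (w : (V → Fin b) → ℝ)
    (x : EuclideanSpace ℝ (Fin d)) : ℝ :=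
  ∑ A : V → Fin b, w A * (histCell d b V A).indicator (fun _ => (1 : ℝ)) x

lemma histogram_mem_histClass {C : ℝ} {w : (V → Fin b) → ℝ} (hw : ∀ A, w A ∈ Set.Icc 0 C) :
    histogram d b V w ∈ histClass d b V C :=
  ⟨w, hw, rfl⟩

lemma cellCenter_mem_unitCube (A : V → Fin b) : cellCenter b V A ∈ unitCube V.card := by
  intro i
  have hbR : (0 : ℝ) < b := Nat.cast_pos.2 (A (V.orderIsoOfFin rfl i)).pos
  have hA : ((A (V.orderIsoOfFin rfl i) : ℕ) : ℝ) + 1 ≤ b := by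
    exact_mod_cast (A (V.orderIsoOfFin rfl i)).isLt
  simp only [cellCenter, PiLp.toLp_apply, le_div_iff₀ hbR, div_le_one hbR]
  constructor <;> linarith [Nat.cast_nonneg (α := ℝ) (A (V.orderIsoOfFin rfl i))]

lemma exists_mem_histCell (hb : 0 < b) (V : Finset (Fin d)) {x : EuclideanSpace ℝ (Fin d)}
    (hx : x ∈ unitCube d) : ∃ A, x ∈ histCell d b V A := by
  choose A hA using fun i : V => exists_fin_mem_Icc_div hb (hx i)
  exact ⟨A, hx, hA⟩

lemma eq_of_mem_histCell {x : EuclideanSpace ℝ (Fin d)} (hx : x ∉ gridHyperplanes d b)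
    {A A' : V → Fin b} (hA : x ∈ histCell d b V A) (hA' : x ∈ histCell d b V A') : A = A' := by
  have hfloor : ∀ {B : V → Fin b}, x ∈ histCell d b V B → ∀ i : V, ⌊x i * b⌋₊ = B i :=
    fun {B} hB i => Nat.floor_mul_eq_of_mem_Icc_div (hB.2 i) fun h =>
      hx (Set.mem_iUnion₂.2 ⟨i, B i + 1, by simpa using h⟩)
  funext i
  exact Fin.ext ((hfloor hA i).symm.trans (hfloor hA' i))

lemma histogram_eq_of_mem_histCell {x : EuclideanSpace ℝ (Fin d)}
    (hx : x ∉ gridHyperplanes d b) {A : V → Fin b} (hA : x ∈ histCell d b V A)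
    (w : (V → Fin b) → ℝ) : histogram d b V w x = w A := by
  rw [histogram, Finset.sum_eq_single_of_mem A (Finset.mem_univ A) fun A' _ hA' => by
    rw [Set.indicator_of_notMem fun h => hA' (eq_of_mem_histCell hx h hA), mul_zero],
    Set.indicator_of_mem hA, mul_one]

lemma dist_coordProj_cellCenter_le {x : EuclideanSpace ℝ (Fin d)} {A : V → Fin b}
    (hA : x ∈ histCell d b V A) :
    dist (coordProj d V x) (cellCenter b V A) ≤ √V.card / (2 * b) := by
  have h := EuclideanSpace.dist_le_sqrt_card_mul (x := coordProj d V x) (y := cellCenter b V A)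
    (r := 1 / (2 * b)) fun i => abs_sub_div_le_of_mem_Icc_div (hA.2 (V.orderIsoOfFin rfl i))
  rwa [Fintype.card_fin, mul_one_div] at h

end Cells

theorem histClass_approximates_lipschitz_general
    (d b : ℕ) (hb : 0 < b) (V : Finset (Fin d))
    (f : EuclideanSpace ℝ (Fin V.card) → ℝ) (L : NNReal)
    (hlip : LipschitzOnWith L f (unitCube V.card))
    (C : ℝ)
    (hrange : ∀ y ∈ unitCube V.card, 0 ≤ f y ∧ f y ≤ C) :
    ∃ q ∈ histClass d b V C,
      ∫ x in unitCube d, |f (coordProj d V x) - q x| ≤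
        Real.sqrt V.card * L / (2 * b) := by
  set w : (V → Fin b) → ℝ := fun A => f (cellCenter b V A)
  refine ⟨histogram d b V w,
    histogram_mem_histClass fun A => hrange _ (cellCenter_mem_unitCube A), ?_⟩
  have hbound : ∀ᵐ x ∂volume.restrict (unitCube d),
      ‖|f (coordProj d V x) - histogram d b V w x|‖ ≤ √V.card * L / (2 * b) := by
    filter_upwards [ae_restrict_mem (measurableSet_unitCube d),
      ae_restrict_of_ae (measure_eq_zero_iff_ae_notMem.1 volume_gridHyperplanes)] with x hx hxN
    obtain ⟨A, hA⟩ := exists_mem_histCell hb V hx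
    rw [Real.norm_eq_abs, abs_abs, histogram_eq_of_mem_histCell hxN hA, ← Real.dist_eq]
    calc dist (f (coordProj d V x)) (f (cellCenter b V A))
        ≤ L * dist (coordProj d V x) (cellCenter b V A) :=
          hlip.dist_le_mul _ (fun i => hx _) _ (cellCenter_mem_unitCube A)
      _ ≤ L * (√V.card / (2 * b)) := by gcongr; exact dist_coordProj_cellCenter_le hA
      _ = √V.card * L / (2 * b) := by ring
  calc ∫ x in unitCube d, |f (coordProj d V x) - histogram d b V w x|
      ≤ ‖∫ x in unitCube d, |f (coordProj d V x) - histogram d b V w x|‖ := Real.le_norm_self _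
    _ ≤ √V.card * L / (2 * b) * volume.real (unitCube d) :=
      norm_setIntegral_le_of_norm_le_const_ae (by simp [volume_unitCube]) hbound
    _ = √V.card * L / (2 * b) := by simp [Measure.real, volume_unitCube]

/-- If `f : [0,1]^{|V|} → ℝ` is `L`-Lipschitz with `0 ≤ f ≤ C` on the unit cube (`C ≥ 1`),
then some histogram `q ∈ 𝒬_{d,b,V,C}` satisfies `‖f ∘ e_V − q‖₁ ≤ √|V| · L / (2b)`,
the `L¹` norm being over `[0,1]^d` with Lebesgue measure. -/
theorem histClass_approximates_lipschitz
    (d b : ℕ) (hb : 0 < b) (V : Finset (Fin d))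
    (f : EuclideanSpace ℝ (Fin V.card) → ℝ) (L : NNReal)
    (hlip : LipschitzOnWith L f (unitCube V.card))
    (C : ℝ) (hC : 1 ≤ C)
    (hrange : ∀ y ∈ unitCube V.card, 0 ≤ f y ∧ f y ≤ C) :
    ∃ q ∈ histClass d b V C,
      ∫ x in unitCube d, |f (coordProj d V x) - q x| ≤
        Real.sqrt V.card * L / (2 * b) :=
  histClass_approximates_lipschitz_general d b hb V f L hlip C hrange
end

section
/- Fix d, d', t ∈ ℕ with t < d and t < d'. The clique number of the t-th power grid graph L_{d×d'}^t is at most (t² + 4t + 3)/2; more precisely it is at most (t+1)·⌈(t+1)/2⌉. -/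
/-!
The rotation `(x, y) ↦ (x + y, x - y)` turns Manhattan distance into Chebyshev distance and maps
the grid into the points of `ℤ²` whose two coordinates have the same parity. A clique of
`L_{d×d'}^t` thus becomes a set with at most `t + 1` distinct first coordinates, and in each
column its second coordinates lie in a window of length `t` and share one parity, so there are
at most `⌊t/2⌋ + 1` of them.
-/

/-- The `t`-th power `L_{d×d'}^t` of the grid graph: vertices are `{1,…,d} × {1,…,d'}` and
distinct vertices are adjacent iff their Manhattan distance is at most `t`. -/
def gridPowGraph (d d' t : ℕ) : SimpleGraph (Fin d × Fin d') where
  Adj a b := a ≠ b ∧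
    ((a.1 : ℤ) - b.1).natAbs + ((a.2 : ℤ) - b.2).natAbs ≤ t
  symm := ⟨by
    rintro a b ⟨hne, hd⟩
    exact ⟨hne.symm, by omega⟩⟩
  loopless := ⟨by rintro a ⟨hne, -⟩; exact hne rfl⟩

open Finset

theorem Int.card_le_div_add_one_of_modEq {S : Finset ℤ} {m t : ℕ} (hm : 0 < m)
    (hmod : ∀ x ∈ S, ∀ y ∈ S, x ≡ y [ZMOD m]) (hdiam : ∀ x ∈ S, ∀ y ∈ S, |x - y| ≤ t) :
    #S ≤ t / m + 1 := by
  obtain rfl | hS := S.eq_empty_or_nonempty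
  · simp
  set a := S.min' hS
  have ha : a ∈ S := S.min'_mem hS
  have hoff : ∀ x ∈ S, 0 ≤ x - a ∧ x - a ≤ t := fun x hx =>
    ⟨sub_nonneg.2 (S.min'_le x hx), (le_abs_self _).trans (hdiam x hx a ha)⟩
  have hmul : ∀ x ∈ S, (m : ℤ) * ((x - a) / m) = x - a := fun x hx =>
    Int.mul_ediv_cancel' (hmod a ha x hx).dvd
  calc #S ≤ #(Finset.range (t / m + 1)) := by
        refine card_le_card_of_injOn (fun x => ((x - a) / m).toNat) (fun x hx => ?_) ?_
        · have : (x - a) / m ≤ (t : ℤ) / m := Int.ediv_le_ediv (by omega) (hoff x hx).2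
          simp only [coe_range, Set.mem_Iio]
          exact Nat.lt_succ_of_le (Int.toNat_le.2 (by rwa [Int.natCast_div]))
        · intro x hx y hy hxy
          have hx0 := Int.ediv_nonneg (hoff x hx).1 (Int.natCast_nonneg m)
          have hy0 := Int.ediv_nonneg (hoff y hy).1 (Int.natCast_nonneg m)
          have hq : (x - a) / m = (y - a) / m := by simp only at hxy; omega
          calc x = a + m * ((x - a) / m) := by linarith [hmul x hx]
            _ = a + m * ((y - a) / m) := by rw [hq]
            _ = y := by linarith [hmul y hy]
    _ = t / m + 1 := card_range _

theorem card_le_of_abs_sub_le_of_fst_modEq_snd {T : Finset (ℤ × ℤ)} {t : ℕ}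
    (hdiam : ∀ p ∈ T, ∀ q ∈ T, |p.1 - q.1| ≤ t ∧ |p.2 - q.2| ≤ t)
    (hpar : ∀ p ∈ T, p.1 ≡ p.2 [ZMOD 2]) :
    #T ≤ (t + 1) * (t / 2 + 1) := by
  have hcol : ∀ u ∈ T.image Prod.fst, #{p ∈ T | p.1 = u} ≤ t / 2 + 1 := by
    intro u _
    rw [← card_image_of_injOn (f := Prod.snd) fun p hp q hq h =>
      Prod.ext ((mem_filter.1 hp).2.trans (mem_filter.1 hq).2.symm) h]
    refine Int.card_le_div_add_one_of_modEq two_pos ?_ ?_ <;>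
      simp only [forall_mem_image, mem_filter, and_imp] <;> intro p hp hpu q hq hqu
    · exact (hpar p hp).symm.trans (hpu ▸ hqu ▸ hpar q hq)
    · exact (hdiam p hp q hq).2
  have hrows : #(T.image Prod.fst) ≤ t / 1 + 1 := by
    refine Int.card_le_div_add_one_of_modEq one_pos ?_ ?_ <;>
      simp only [forall_mem_image] <;> intro p hp q hq
    · exact Int.modEq_one
    · exact (hdiam p hp q hq).1
  calc #T = ∑ u ∈ T.image Prod.fst, #{p ∈ T | p.1 = u} := card_eq_sum_card_image _ _
    _ ≤ #(T.image Prod.fst) * (t / 2 + 1) := sum_le_card_nsmul _ _ _ hcol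
    _ ≤ (t + 1) * (t / 2 + 1) := by rw [Nat.div_one] at hrows; gcongr

theorem gridPowGraph.card_le_of_isClique {d d' t : ℕ} {s : Finset (Fin d × Fin d')}
    (hs : (gridPowGraph d d' t).IsClique s) : #s ≤ (t + 1) * (t / 2 + 1) := by
  let rot : Fin d × Fin d' → ℤ × ℤ := fun p => ((p.1 : ℤ) + p.2, (p.1 : ℤ) - p.2)
  have hrot : Set.InjOn rot s := fun p _ q _ h => by
    simp only [rot, Prod.mk.injEq] at h
    ext <;> omega
  have hdist : ∀ p ∈ s, ∀ q ∈ s,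
      ((p.1 : ℤ) - q.1).natAbs + ((p.2 : ℤ) - q.2).natAbs ≤ t := by
    intro p hp q hq
    obtain rfl | hpq := eq_or_ne p q
    · simp
    · exact (hs hp hq hpq).2
  rw [← card_image_of_injOn hrot]
  refine card_le_of_abs_sub_le_of_fst_modEq_snd ?_ ?_ <;> simp only [forall_mem_image]
  · intro p hp q hq
    have := hdist p hp q hq
    simp only [rot, abs_le]
    omega
  · intro p _
    simp only [rot, Int.ModEq]
    omega

theorem gridPowGraph_cliqueNum_le_general
    (d d' t : ℕ) :
    (gridPowGraph d d' t).cliqueNum ≤ (t + 1) * ((t + 2) / 2) ∧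
      ((gridPowGraph d d' t).cliqueNum : ℝ) ≤ ((t : ℝ) ^ 2 + 4 * t + 3) / 2 := by
  obtain ⟨s, hs⟩ := (gridPowGraph d d' t).exists_isNClique_cliqueNum
  have hle : (gridPowGraph d d' t).cliqueNum ≤ (t + 1) * (t / 2 + 1) :=
    hs.card_eq ▸ gridPowGraph.card_le_of_isClique hs.isClique
  rw [Nat.add_div_right t two_pos]
  refine ⟨hle, ?_⟩
  have hhalf : ((t / 2 : ℕ) : ℝ) ≤ t / 2 := Nat.cast_div_le
  calc ((gridPowGraph d d' t).cliqueNum : ℝ) ≤ (t + 1) * ((t / 2 : ℕ) + 1) := by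
        exact_mod_cast hle
    _ ≤ (t + 1) * (t / 2 + 1) := by gcongr
    _ ≤ ((t : ℝ) ^ 2 + 4 * t + 3) / 2 := by nlinarith

/-- The clique number of `L_{d×d'}^t` (with `t < d`, `t < d'`) is at most
`(t+1)·⌈(t+1)/2⌉`, and in particular at most `(t² + 4t + 3)/2`. -/
theorem gridPowGraph_cliqueNum_le
    (d d' t : ℕ) (htd : t < d) (htd' : t < d') :
    (gridPowGraph d d' t).cliqueNum ≤ (t + 1) * ((t + 2) / 2) ∧
      ((gridPowGraph d d' t).cliqueNum : ℝ) ≤ ((t : ℝ) ^ 2 + 4 * t + 3) / 2 :=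
  gridPowGraph_cliqueNum_le_general d d' t
end

section
/- Let ℱ be a nonempty set of bounded measurable functions from [0,1]^d to ℝ, let p be a probability density on [0,1]^d with ‖p‖₂ < ∞, and let x₁, …, x_n ∈ [0,1]^d. Suppose p̂ ∈ ℱ minimizes f ↦ ‖f‖₂² − (2/n)Σ_{i=1}^n f(x_i) over ℱ, and p* ∈ ℱ minimizes f ↦ ‖f − p‖₂² over ℱ. Then ‖p̂ − p‖₂² ≤ 4·sup_{f ∈ ℱ} |∫_{[0,1]^d} f(x)p(x) dx − (1/n)Σ_{i=1}^n f(x_i)| + ‖p* − p‖₂². -/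
/-!
Expanding the square, `‖f - p‖₂² = ‖f‖₂² - 2 ∫ f p + ‖p‖₂²` for every `f ∈ ℱ`, so up to the
constant `‖p‖₂²` the empirical criterion minimized by `phat` differs from the population risk
`‖f - p‖₂²` by `2 (∫ f p - (1/n) ∑ᵢ f(xᵢ))`, which is at most `2B` in absolute value. A minimizer
of a criterion that is uniformly `2B`-close to the risk has risk within `4B` of that of any
competitor, in particular of `pstar`.
-/

open MeasureTheory

lemma isCompact_unitCube (d : ℕ) : IsCompact (unitCube d) := by
  have hcube : unitCube d = EuclideanSpace.equiv (Fin d) ℝ ⁻¹' Set.Icc 0 1 := by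
    ext y
    simp [unitCube, Pi.le_def, forall_and]
  rw [hcube]
  exact (EuclideanSpace.equiv (Fin d) ℝ).toHomeomorph.isCompact_preimage.2 isCompact_Icc

lemma integral_sub_sq {α : Type*} [MeasurableSpace α] {μ : Measure α} {f g : α → ℝ}
    (hf : MemLp f 2 μ) (hg : MemLp g 2 μ) :
    ∫ x, (f x - g x) ^ 2 ∂μ = ∫ x, f x ^ 2 ∂μ - 2 * ∫ x, f x * g x ∂μ + ∫ x, g x ^ 2 ∂μ := by
  have hfg : Integrable (fun x => 2 * (f x * g x)) μ := (hf.integrable_mul hg).const_mul 2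
  calc ∫ x, (f x - g x) ^ 2 ∂μ = ∫ x, (f x ^ 2 - 2 * (f x * g x) + g x ^ 2) ∂μ := by
        congr 1; ext x; ring
    _ = _ := by
        rw [integral_add (f := fun x => f x ^ 2 - 2 * (f x * g x)) (hf.integrable_sq.sub hfg)
            hg.integrable_sq, integral_sub hf.integrable_sq hfg, integral_const_mul]

lemma le_add_of_isMinOn_of_abs_sub_le {ι : Type*} {L L' : ι → ℝ} {s : Set ι} {i j : ι} {ε : ℝ}
    (hmin : IsMinOn L' s i) (hclose : ∀ k ∈ s, |L k - L' k| ≤ ε) (hi : i ∈ s) (hj : j ∈ s) :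
    L i ≤ L j + 2 * ε := by
  have hi' := abs_le.1 (hclose i hi)
  have hj' := abs_le.1 (hclose j hj)
  linarith [isMinOn_iff.1 hmin j hj]

theorem l2_estimator_oracle_inequality_general
    (d n : ℕ)
    (ℱ : Set (EuclideanSpace ℝ (Fin d) → ℝ))
    (hmeas : ∀ f ∈ ℱ, Measurable f)
    (hbdd : ∀ f ∈ ℱ, ∃ M : ℝ, ∀ x, |f x| ≤ M)
    (p : EuclideanSpace ℝ (Fin d) → ℝ)
    (hpmeas : Measurable p)
    (hp2 : IntegrableOn (fun x => p x ^ 2) (unitCube d))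
    (x : Fin n → EuclideanSpace ℝ (Fin d))
    (phat : EuclideanSpace ℝ (Fin d) → ℝ) (hphat : phat ∈ ℱ)
    (hphatmin : ∀ f ∈ ℱ,
      (∫ y in unitCube d, phat y ^ 2) - (2 / n) * ∑ i, phat (x i) ≤
        (∫ y in unitCube d, f y ^ 2) - (2 / n) * ∑ i, f (x i))
    (pstar : EuclideanSpace ℝ (Fin d) → ℝ) (hpstar : pstar ∈ ℱ) :
    ∀ B : ℝ,
      (∀ f ∈ ℱ,
        |(∫ y in unitCube d, f y * p y) - (1 / n) * ∑ i, f (x i)| ≤ B) →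
      (∫ y in unitCube d, (phat y - p y) ^ 2) ≤
        4 * B + ∫ y in unitCube d, (pstar y - p y) ^ 2 := by
  intro B hB
  have : IsFiniteMeasure (volume.restrict (unitCube d)) :=
    isFiniteMeasure_restrict.2 (isCompact_unitCube d).measure_lt_top.ne
  have hpL2 : MemLp p 2 (volume.restrict (unitCube d)) :=
    (memLp_two_iff_integrable_sq hpmeas.aestronglyMeasurable).2 hp2
  have hclose : ∀ f ∈ ℱ, |(∫ y in unitCube d, (f y - p y) ^ 2) -
      ((∫ y in unitCube d, f y ^ 2) - (2 / n) * ∑ i, f (x i) + ∫ y in unitCube d, p y ^ 2)| ≤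
        2 * B := by
    intro f hf
    obtain ⟨M, hM⟩ := hbdd f hf
    have hfL2 : MemLp f 2 (volume.restrict (unitCube d)) :=
      .of_bound (hmeas f hf).aestronglyMeasurable M (ae_of_all _ hM)
    rw [integral_sub_sq hfL2 hpL2]
    calc _ = 2 * |(∫ y in unitCube d, f y * p y) - (1 / n) * ∑ i, f (x i)| := by
          rw [← abs_two, ← abs_mul, ← abs_neg]; congr 1; ring
      _ ≤ 2 * B := by linarith [hB f hf]
  have hmin := le_add_of_isMinOn_of_abs_sub_le (isMinOn_iff.2 fun f hf => by
    linarith [hphatmin f hf]) hclose hphat hpstar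
  linarith

/-- Oracle inequality for the `L²`-minimizing estimator: if `phat ∈ ℱ` minimizes
`f ↦ ‖f‖₂² − (2/n)·∑ᵢ f(xᵢ)` over `ℱ` and `pstar ∈ ℱ` minimizes `f ↦ ‖f − p‖₂²` over
`ℱ`, then `‖phat − p‖₂² ≤ 4·sup_{f ∈ ℱ} |∫ f·p − (1/n)∑ᵢ f(xᵢ)| + ‖pstar − p‖₂²`
(formulated via an arbitrary upper bound `B` for the supremum). -/
theorem l2_estimator_oracle_inequality
    (d n : ℕ) (hn : 0 < n)
    (ℱ : Set (EuclideanSpace ℝ (Fin d) → ℝ)) (hne : ℱ.Nonempty)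
    (hmeas : ∀ f ∈ ℱ, Measurable f)
    (hbdd : ∀ f ∈ ℱ, ∃ M : ℝ, ∀ x, |f x| ≤ M)
    (p : EuclideanSpace ℝ (Fin d) → ℝ)
    (hpmeas : Measurable p)
    (hpnonneg : ∀ x ∈ unitCube d, 0 ≤ p x)
    (hpint : ∫ x in unitCube d, p x = 1)
    (hp2 : IntegrableOn (fun x => p x ^ 2) (unitCube d))
    (x : Fin n → EuclideanSpace ℝ (Fin d)) (hx : ∀ i, x i ∈ unitCube d)
    (phat : EuclideanSpace ℝ (Fin d) → ℝ) (hphat : phat ∈ ℱ)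
    (hphatmin : ∀ f ∈ ℱ,
      (∫ y in unitCube d, phat y ^ 2) - (2 / n) * ∑ i, phat (x i) ≤
        (∫ y in unitCube d, f y ^ 2) - (2 / n) * ∑ i, f (x i))
    (pstar : EuclideanSpace ℝ (Fin d) → ℝ) (hpstar : pstar ∈ ℱ)
    (hpstarmin : ∀ f ∈ ℱ,
      (∫ y in unitCube d, (pstar y - p y) ^ 2) ≤ ∫ y in unitCube d, (f y - p y) ^ 2) :
    ∀ B : ℝ,
      (∀ f ∈ ℱ,
        |(∫ y in unitCube d, f y * p y) - (1 / n) * ∑ i, f (x i)| ≤ B) →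
      (∫ y in unitCube d, (phat y - p y) ^ 2) ≤
        4 * B + ∫ y in unitCube d, (pstar y - p y) ^ 2 :=
  l2_estimator_oracle_inequality_general d n ℱ hmeas hbdd p hpmeas hp2 x phat hphat hphatmin pstar
    hpstar
end
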